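/- Let U be a unitary operator on a complex Hilbert space H such that 1 + U is Fredholm, and let W ⊆ H be a closed finite-codimensional subspace with Ker(1+U) ∩ W = {0}. Write U = [[X,Y],[Z,T]] in block form relative to H = W ⊕ W⊥. Then 1 + X : W → W is invertible, and the operator ℛ(U) := T − Z(1+X)⁻¹Y on W⊥ is unitary. Moreover Ker(1 + ℛ(U)) = P_{W⊥}(Ker(1+U)), and in particular dim Ker(1 + ℛ(U)) = dim Ker(1+U). -/

import Mathlib

noncomputable section

variable (H : Type) [NormedAddCommGroup H] [InnerProductSpace ℂ H] [CompleteSpace H]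

/-- A bounded operator `T` on `H` is Fredholm: finite-dimensional kernel,
finite-dimensional cokernel, and closed range. -/
def IsFredholmOp (T : H →L[ℂ] H) : Prop :=
  FiniteDimensional ℂ ↥(LinearMap.ker (T : H →ₗ[ℂ] H)) ∧
  FiniteDimensional ℂ (H ⧸ LinearMap.range (T : H →ₗ[ℂ] H)) ∧
  IsClosed ((LinearMap.range (T : H →ₗ[ℂ] H) : Submodule ℂ H) : Set H)

/-!
Write `U = [[X, Y], [Z, T]]` relative to `W ⊕ W⊥` and let `S = (1 + X)⁻¹`. For `v ∈ W⊥` put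
`w = S Y v ∈ W`; the first block row of `U (v - w)` is `Y v - X w = w`, so
`U (v - w) = w + ℛ(U) v`. Pythagoras on both sides makes `ℛ(U)` isometric, and
`(1 + U)(v - w) = v + ℛ(U) v`. Conversely the `W`-component of any `x ∈ Ker(1 + U)` is forced to
be `-S Y (P_{W⊥} x)`, so `x` is the lift of `P_{W⊥} x`; this gives the kernel identity, and
`P_{W⊥}` is injective on `Ker(1 + U)` because `Ker(1 + U) ∩ W = 0`. Since `ℛ(U)* = ℛ(U*)`, computed
with `S*`, the adjoint is isometric as well, so `ℛ(U)` is unitary.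

Invertibility of `1 + X = P_W (1 + U)|_W`: if `P_W (w + U w) = 0` then `re ⟪w, U w⟫ = -‖w‖²`, so
`‖w + U w‖² = ‖U w‖² - ‖w‖² = 0` and `w ∈ Ker(1 + U) ∩ W`. The same argument for `U*` (with
`Ker(1 + U*) = Ker(1 + U)`) shows that the adjoint of `1 + X` is injective, so it remains to see
that the range `P_W ((1 + U) W)` is closed. By the open mapping theorem a map `f` with closed
range sends `M` to a closed subspace as soon as `M + Ker f` is closed; apply this to `1 + U` with
`M = W`, then to `P_W` with `M = (1 + U) W`, the sums `W + Ker(1 + U)` and `(1 + U) W + W⊥` being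
closed because the added summands are finite-dimensional.
-/

section

open scoped InnerProductSpace

theorem ContinuousLinearMap.isClosed_map_of_isClosed_sup_ker {𝕜 E F : Type*}
    [NontriviallyNormedField 𝕜] [NormedAddCommGroup E] [NormedSpace 𝕜 E] [CompleteSpace E]
    [NormedAddCommGroup F] [NormedSpace 𝕜 F] [CompleteSpace F]
    (f : E →L[𝕜] F) (hf : IsClosed (f.range : Set F)) {M : Submodule 𝕜 E}
    (hM : IsClosed ((M ⊔ f.ker : Submodule 𝕜 E) : Set E)) :
    IsClosed ((M.map (f : E →ₗ[𝕜] F)) : Set F) := by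
  have : CompleteSpace f.range := hf.completeSpace_coe
  set g : E →L[𝕜] f.range := f.codRestrict f.range fun x ↦ ⟨x, rfl⟩
  have hg : Function.Surjective g := fun ⟨_, x, hx⟩ ↦ ⟨x, Subtype.ext hx⟩
  have hquot : Topology.IsQuotientMap g := (g.isOpenMap hg).isQuotientMap g.continuous hg
  have hclosed : IsClosed ((M.map (g : E →ₗ[𝕜] f.range)) : Set f.range) := by
    rw [← hquot.isClosed_preimage]
    change IsClosed (((M.map (g : E →ₗ[𝕜] f.range)).comap (g : E →ₗ[𝕜] f.range)) : Set E)
    rwa [Submodule.comap_map_eq, show (g : E →ₗ[𝕜] f.range).ker = f.ker from f.ker_codRestrict _ _]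
  have hfg : M.map (f : E →ₗ[𝕜] F) = (M.map (g : E →ₗ[𝕜] f.range)).map f.range.subtype := by
    rw [← Submodule.map_comp]; rfl
  rw [hfg, Submodule.map_coe]
  exact hf.isClosedMap_subtype_val _ hclosed

theorem Submodule.finrank_map_of_disjoint_ker {R M N : Type*} [DivisionRing R]
    [AddCommGroup M] [Module R M] [AddCommGroup N] [Module R N]
    (f : M →ₗ[R] N) {K : Submodule R M} (h : Disjoint K f.ker) :
    Module.finrank R (K.map f) = Module.finrank R K := by
  rw [← LinearMap.range_domRestrict]
  exact LinearMap.finrank_range_of_inj (LinearMap.injective_domRestrict_iff.mpr h)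

variable {𝕜 E : Type*} [RCLike 𝕜] [NormedAddCommGroup E] [InnerProductSpace 𝕜 E]

theorem Submodule.isClosed_of_hasOrthogonalProjection (K : Submodule 𝕜 E)
    [K.HasOrthogonalProjection] : IsClosed (K : Set E) :=
  K.orthogonal_orthogonal ▸ Kᗮ.isClosed_orthogonal

theorem Submodule.orthogonalProjectionOnto_coe_sub_coe (K : Submodule 𝕜 E)
    [K.HasOrthogonalProjection] (v : Kᗮ) (w : K) : K.orthogonalProjectionOnto (v - w) = -w := by
  rw [map_sub, K.orthogonalProjectionOnto_apply_of_mem_orthogonal v.2,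
    K.orthogonalProjectionOnto_mem_subspace_eq_self, zero_sub]

theorem Submodule.orthogonalProjectionOnto_orthogonal_coe_sub_coe (K : Submodule 𝕜 E)
    [K.HasOrthogonalProjection] (v : Kᗮ) (w : K) : Kᗮ.orthogonalProjectionOnto (v - w) = v := by
  rw [map_sub, Kᗮ.orthogonalProjectionOnto_mem_subspace_eq_self,
    Kᗮ.orthogonalProjectionOnto_apply_of_mem_orthogonal (K.le_orthogonal_orthogonal w.2), sub_zero]

namespace ContinuousLinearMap

/-- Relative to `E = W ⊕ Wᗮ` the blocks of `U = [[X, Y], [Z, T]]` are `X = compression U W W`,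
`Y = compression U Wᗮ W`, `Z = compression U W Wᗮ` and `T = compression U Wᗮ Wᗮ`. -/
def compression (U : E →L[𝕜] E) (V W : Submodule 𝕜 E) [W.HasOrthogonalProjection] :
    V →L[𝕜] W :=
  W.orthogonalProjectionOnto ∘L U ∘L V.subtypeL

theorem one_add_compression_self (U : E →L[𝕜] E) (W : Submodule 𝕜 E) [W.HasOrthogonalProjection] :
    1 + compression U W W = compression (1 + U) W W := by
  ext w
  simp [compression, Submodule.orthogonalProjectionOnto_mem_subspace_eq_self]

theorem orthogonalProjectionOnto_apply_eq_add_compression (U : E →L[𝕜] E) (W V : Submodule 𝕜 E)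
    [W.HasOrthogonalProjection] [V.HasOrthogonalProjection] (x : E) :
    V.orthogonalProjectionOnto (U x) = compression U W V (W.orthogonalProjectionOnto x) +
      compression U Wᗮ V (Wᗮ.orthogonalProjectionOnto x) := by
  conv_lhs => rw [← W.starProjection_add_starProjection_orthogonal x]
  rw [map_add, map_add]
  rfl

theorem adjoint_compression [CompleteSpace E] (U : E →L[𝕜] E) (V W : Submodule 𝕜 E)
    [CompleteSpace V] [CompleteSpace W] :
    adjoint (compression U V W) = compression (adjoint U) W V := by
  simp only [compression, adjoint_comp, Submodule.adjoint_subtypeL,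
    Submodule.adjoint_orthogonalProjectionOnto, comp_assoc]

theorem ker_one_add_compression_self_eq_bot {U : E →L[𝕜] E} (hU : ∀ x, ‖U x‖ ≤ ‖x‖)
    {W : Submodule 𝕜 E} [W.HasOrthogonalProjection] (hW : (1 + U).ker ⊓ W = ⊥) :
    (1 + compression U W W).ker = ⊥ := by
  rw [one_add_compression_self, Submodule.eq_bot_iff]
  intro w hw
  have horth : (1 + U) w ∈ Wᗮ := Submodule.orthogonalProjectionOnto_eq_zero_iff.mp hw
  have hinner : ⟪(w : E), w + U w⟫_𝕜 = 0 := Submodule.inner_right_of_mem_orthogonal w.2 horth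
  have hre : ‖(w : E)‖ ^ 2 + RCLike.re ⟪(w : E), U w⟫_𝕜 = 0 := by
    rw [inner_add_right] at hinner
    simpa only [map_add, inner_self_eq_norm_sq, map_zero] using congrArg RCLike.re hinner
  have hnorm : ‖(w : E) + U w‖ = 0 := by
    nlinarith [norm_add_sq (𝕜 := 𝕜) (w : E) (U w), hU w, norm_nonneg (U w),
      norm_nonneg ((w : E) + U w)]
  have hmem : (w : E) ∈ (1 + U).ker ⊓ W := ⟨norm_eq_zero.mp hnorm, w.2⟩
  rw [hW] at hmem
  exact Subtype.ext hmem

theorem isUnit_of_ker_eq_bot_of_ker_adjoint_eq_bot [CompleteSpace E] {T : E →L[𝕜] E}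
    (hT : T.ker = ⊥) (hTadj : (adjoint T).ker = ⊥) (hrange : IsClosed (T.range : Set E)) :
    IsUnit T := by
  have : CompleteSpace T.range := hrange.completeSpace_coe
  refine T.isUnit_iff_bijective.mpr ⟨LinearMap.ker_eq_bot.mp hT, LinearMap.range_eq_top.mp ?_⟩
  rw [← Submodule.orthogonal_eq_bot_iff, orthogonal_range, hTadj]

theorem isClosed_range_compression_self [CompleteSpace E] {A : E →L[𝕜] E}
    (hA : IsClosed (A.range : Set E)) [FiniteDimensional 𝕜 A.ker]
    (W : Submodule 𝕜 E) [W.HasOrthogonalProjection] [FiniteDimensional 𝕜 Wᗮ] :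
    IsClosed ((compression A W W).range : Set W) := by
  have hW := W.isClosed_of_hasOrthogonalProjection
  have : CompleteSpace W := hW.completeSpace_coe
  have hAW : IsClosed ((W.map (A : E →ₗ[𝕜] E)) : Set E) :=
    A.isClosed_map_of_isClosed_sup_ker hA (W.isClosed_sup_finiteDimensional _ hW)
  have hrange : (compression A W W).range = (W.map (A : E →ₗ[𝕜] E)).map
      (W.orthogonalProjectionOnto : E →ₗ[𝕜] W) := by
    rw [compression, toLinearMap_comp, toLinearMap_comp, LinearMap.range_comp, LinearMap.range_comp,
      show (W.subtypeL : W →ₗ[𝕜] E).range = W from W.range_subtype]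
  rw [hrange]
  refine W.orthogonalProjectionOnto.isClosed_map_of_isClosed_sup_ker ?_ ?_
  · have hsurj : Function.Surjective (W.orthogonalProjectionOnto : E →ₗ[𝕜] W) :=
      fun w ↦ ⟨w, W.orthogonalProjectionOnto_mem_subspace_eq_self w⟩
    rw [LinearMap.range_eq_top.mpr hsurj]
    exact isClosed_univ
  · rw [Submodule.ker_orthogonalProjectionOnto]
    exact Submodule.isClosed_sup_finiteDimensional _ _ hAW

theorem ker_one_add_star_eq_ker_one_add [CompleteSpace E] {U : E →L[𝕜] E}
    (hU : U ∈ unitary (E →L[𝕜] E)) : (1 + star U).ker = (1 + U).ker := by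
  have hfactor : 1 + star U = star U * (1 + U) := by
    rw [mul_add, mul_one, Unitary.star_mul_self_of_mem hU, add_comm]
  ext x
  simp only [LinearMap.mem_ker, coe_coe, hfactor]
  change star U ((1 + U) x) = 0 ↔ (1 + U) x = 0
  rw [← norm_eq_zero, norm_map_of_mem_unitary (Unitary.star_mem hU), norm_eq_zero]

theorem isUnit_one_add_compression_self [CompleteSpace E] {U : E →L[𝕜] E}
    (hU : U ∈ unitary (E →L[𝕜] E)) [FiniteDimensional 𝕜 (1 + U).ker]
    (hrange : IsClosed ((1 + U).range : Set E)) {W : Submodule 𝕜 E} [W.HasOrthogonalProjection]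
    [FiniteDimensional 𝕜 Wᗮ] (hW : (1 + U).ker ⊓ W = ⊥) :
    IsUnit (1 + compression U W W) := by
  have : CompleteSpace W := W.isClosed_of_hasOrthogonalProjection.completeSpace_coe
  have hadj : adjoint (1 + compression U W W) = 1 + compression (star U) W W := by
    rw [map_add, adjoint_one, adjoint_compression, star_eq_adjoint]
  refine isUnit_of_ker_eq_bot_of_ker_adjoint_eq_bot ?_ ?_ ?_
  · exact ker_one_add_compression_self_eq_bot (fun x ↦ (norm_map_of_mem_unitary hU x).le) hW
  · rw [hadj]
    refine ker_one_add_compression_self_eq_bot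
      (fun x ↦ (norm_map_of_mem_unitary (Unitary.star_mem hU) x).le) ?_
    rwa [ker_one_add_star_eq_ker_one_add hU]
  · rw [one_add_compression_self]
    exact isClosed_range_compression_self hrange W

/-- `ℛ(U) = T - Z (1 + X)⁻¹ Y`, with `S` standing for `(1 + X)⁻¹`. -/
def symplecticReduction (U : E →L[𝕜] E) (W : Submodule 𝕜 E) [W.HasOrthogonalProjection]
    (S : W →L[𝕜] W) : Wᗮ →L[𝕜] Wᗮ :=
  compression U Wᗮ Wᗮ - compression U W Wᗮ ∘L S ∘L compression U Wᗮ W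

section Reduction

variable {U : E →L[𝕜] E} {W : Submodule 𝕜 E} [W.HasOrthogonalProjection] {S : W →L[𝕜] W}

theorem apply_sub_eq_add_symplecticReduction (hS : (1 + compression U W W) ∘L S = 1) (v : Wᗮ) :
    U (v - S (compression U Wᗮ W v)) =
      (S (compression U Wᗮ W v) : E) + symplecticReduction U W S v := by
  set w := S (compression U Wᗮ W v)
  have hw : w + compression U W W w = compression U Wᗮ W v := by
    have h := congr($hS (compression U Wᗮ W v))
    simpa only [add_comp, add_apply, comp_apply, one_apply_eq_self] using h
  rw [← W.starProjection_add_starProjection_orthogonal (U (v - w)), Submodule.starProjection_apply,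
    Submodule.starProjection_apply, orthogonalProjectionOnto_apply_eq_add_compression U W W,
    orthogonalProjectionOnto_apply_eq_add_compression U W Wᗮ,
    W.orthogonalProjectionOnto_coe_sub_coe, W.orthogonalProjectionOnto_orthogonal_coe_sub_coe,
    map_neg, map_neg]
  congr 2
  · rw [← hw]; abel
  · simp only [symplecticReduction, sub_apply, comp_apply]
    abel

theorem norm_symplecticReduction_apply (hU : ∀ x, ‖U x‖ = ‖x‖)
    (hS : (1 + compression U W W) ∘L S = 1) (v : Wᗮ) :
    ‖symplecticReduction U W S v‖ = ‖v‖ := by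
  have hsq := congr($(hU (v - S (compression U Wᗮ W v))) ^ 2)
  rw [apply_sub_eq_add_symplecticReduction hS, norm_add_sq (𝕜 := 𝕜), norm_sub_sq (𝕜 := 𝕜),
    Submodule.inner_left_of_mem_orthogonal (S _).2 v.2,
    Submodule.inner_right_of_mem_orthogonal (S _).2 (symplecticReduction U W S v).2] at hsq
  simp only [map_zero, mul_zero, add_zero, sub_zero, Submodule.norm_coe] at hsq
  exact (sq_eq_sq₀ (norm_nonneg _) (norm_nonneg _)).mp (by linarith)

theorem one_add_apply_sub_eq_one_add_symplecticReduction (hS : (1 + compression U W W) ∘L S = 1)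
    (v : Wᗮ) :
    (1 + U) (v - S (compression U Wᗮ W v)) = ((1 + symplecticReduction U W S) v : E) := by
  rw [add_apply, one_apply_eq_self, apply_sub_eq_add_symplecticReduction hS, add_apply,
    one_apply_eq_self, Submodule.coe_add]
  abel

theorem eq_sub_of_mem_ker_one_add (hS : S ∘L (1 + compression U W W) = 1) {x : E}
    (hx : x ∈ LinearMap.ker ((1 + U : E →L[𝕜] E) : E →ₗ[𝕜] E)) :
    x = Wᗮ.orthogonalProjectionOnto x - S (compression U Wᗮ W (Wᗮ.orthogonalProjectionOnto x)) := by
  have hrow : (1 + compression U W W) (W.orthogonalProjectionOnto x) =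
      -compression U Wᗮ W (Wᗮ.orthogonalProjectionOnto x) := by
    have h := congr(W.orthogonalProjectionOnto $(LinearMap.mem_ker.mp hx))
    rw [coe_coe, add_apply, one_apply_eq_self, map_add,
      orthogonalProjectionOnto_apply_eq_add_compression U W W, map_zero] at h
    rw [add_apply, one_apply_eq_self, eq_neg_iff_add_eq_zero, ← h, add_assoc]
  have hP : W.orthogonalProjectionOnto x =
      -S (compression U Wᗮ W (Wᗮ.orthogonalProjectionOnto x)) := by
    rw [← map_neg, ← hrow, ← comp_apply, hS, one_apply_eq_self]
  conv_lhs => rw [← W.starProjection_add_starProjection_orthogonal x]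
  rw [Submodule.starProjection_apply, Submodule.starProjection_apply, hP, Submodule.coe_neg]
  abel

theorem ker_one_add_symplecticReduction (hSl : S ∘L (1 + compression U W W) = 1)
    (hSr : (1 + compression U W W) ∘L S = 1) :
    LinearMap.ker ((1 + symplecticReduction U W S : Wᗮ →L[𝕜] Wᗮ) : Wᗮ →ₗ[𝕜] Wᗮ) =
      (LinearMap.ker ((1 + U : E →L[𝕜] E) : E →ₗ[𝕜] E)).map
        (Wᗮ.orthogonalProjectionOnto).toLinearMap := by
  ext v
  rw [Submodule.mem_map]
  constructor
  · intro hv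
    rw [LinearMap.mem_ker, coe_coe] at hv
    refine ⟨v - S (compression U Wᗮ W v), ?_, W.orthogonalProjectionOnto_orthogonal_coe_sub_coe _ _⟩
    rw [LinearMap.mem_ker, coe_coe, one_add_apply_sub_eq_one_add_symplecticReduction hSr, hv,
      Submodule.coe_zero]
  · rintro ⟨x, hx, rfl⟩
    rw [LinearMap.mem_ker, coe_coe, coe_coe, ← Submodule.coe_eq_zero,
      ← one_add_apply_sub_eq_one_add_symplecticReduction hSr, ← eq_sub_of_mem_ker_one_add hSl hx]
    exact hx

end Reduction

theorem adjoint_symplecticReduction [CompleteSpace E] (U : E →L[𝕜] E) (W : Submodule 𝕜 E)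
    [CompleteSpace W] (S : W →L[𝕜] W) :
    adjoint (symplecticReduction U W S) = symplecticReduction (adjoint U) W (adjoint S) := by
  simp only [symplecticReduction, map_sub, adjoint_comp, adjoint_compression, comp_assoc]

theorem symplecticReduction_mem_unitary [CompleteSpace E] {U : E →L[𝕜] E}
    (hU : U ∈ unitary (E →L[𝕜] E)) {W : Submodule 𝕜 E} [CompleteSpace W] {S : W →L[𝕜] W}
    (hSl : S ∘L (1 + compression U W W) = 1) (hSr : (1 + compression U W W) ∘L S = 1) :
    symplecticReduction U W S ∈ unitary (Wᗮ →L[𝕜] Wᗮ) := by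
  have hSl' : (1 + compression (adjoint U) W W) ∘L adjoint S = 1 := by
    simpa only [adjoint_comp, map_add, adjoint_one, adjoint_compression] using congr(adjoint $hSl)
  have hisom := norm_symplecticReduction_apply (norm_map_of_mem_unitary hU) hSr
  have hisom' := norm_symplecticReduction_apply
    (norm_map_of_mem_unitary (star_eq_adjoint U ▸ Unitary.star_mem hU)) hSl'
  rw [← adjoint_symplecticReduction] at hisom'
  rw [Unitary.mem_iff, star_eq_adjoint]
  refine ⟨(norm_map_iff_adjoint_comp_self _).mp hisom, ?_⟩
  have h := (norm_map_iff_adjoint_comp_self _).mp hisom'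
  rwa [adjoint_adjoint] at h

end ContinuousLinearMap

end

theorem symplectic_reduction_of_unitary (U : H →L[ℂ] H) (hU : U ∈ unitary (H →L[ℂ] H))
    (hFred : IsFredholmOp H (1 + U))
    (W : Submodule ℂ H) [Submodule.HasOrthogonalProjection W]
    [FiniteDimensional ℂ ↥(Wᗮ)]
    (hclean : LinearMap.ker ((1 + U : H →L[ℂ] H) : H →ₗ[ℂ] H) ⊓ W = ⊥) :
    IsUnit ((1 : ↥W →L[ℂ] ↥W) + (Submodule.orthogonalProjectionOnto W ∘L U ∘L W.subtypeL)) ∧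
    ∀ Xinv : ↥W →L[ℂ] ↥W,
      Xinv ∘L ((1 : ↥W →L[ℂ] ↥W) + (Submodule.orthogonalProjectionOnto W ∘L U ∘L W.subtypeL)) = 1 →
      ((1 : ↥W →L[ℂ] ↥W) + (Submodule.orthogonalProjectionOnto W ∘L U ∘L W.subtypeL)) ∘L Xinv = 1 →
      ((Submodule.orthogonalProjectionOnto (Wᗮ) ∘L U ∘L (Wᗮ).subtypeL -
          (Submodule.orthogonalProjectionOnto (Wᗮ) ∘L U ∘L W.subtypeL) ∘L Xinv ∘L
            (Submodule.orthogonalProjectionOnto W ∘L U ∘L (Wᗮ).subtypeL)) ∈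
          unitary (↥(Wᗮ) →L[ℂ] ↥(Wᗮ))) ∧
      LinearMap.ker
          ((1 + (Submodule.orthogonalProjectionOnto (Wᗮ) ∘L U ∘L (Wᗮ).subtypeL -
            (Submodule.orthogonalProjectionOnto (Wᗮ) ∘L U ∘L W.subtypeL) ∘L Xinv ∘L
              (Submodule.orthogonalProjectionOnto W ∘L U ∘L (Wᗮ).subtypeL)) :
            ↥(Wᗮ) →L[ℂ] ↥(Wᗮ)) : ↥(Wᗮ) →ₗ[ℂ] ↥(Wᗮ)) =
        (LinearMap.ker ((1 + U : H →L[ℂ] H) : H →ₗ[ℂ] H)).map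
          (Submodule.orthogonalProjectionOnto (Wᗮ)).toLinearMap ∧
      Module.finrank ℂ
          ↥(LinearMap.ker
            ((1 + (Submodule.orthogonalProjectionOnto (Wᗮ) ∘L U ∘L (Wᗮ).subtypeL -
              (Submodule.orthogonalProjectionOnto (Wᗮ) ∘L U ∘L W.subtypeL) ∘L Xinv ∘L
                (Submodule.orthogonalProjectionOnto W ∘L U ∘L (Wᗮ).subtypeL)) :
              ↥(Wᗮ) →L[ℂ] ↥(Wᗮ)) : ↥(Wᗮ) →ₗ[ℂ] ↥(Wᗮ))) =
        Module.finrank ℂ ↥(LinearMap.ker ((1 + U : H →L[ℂ] H) : H →ₗ[ℂ] H)) := by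
  obtain ⟨hker, -, hrange⟩ := hFred
  have : CompleteSpace W := W.isClosed_of_hasOrthogonalProjection.completeSpace_coe
  refine ⟨ContinuousLinearMap.isUnit_one_add_compression_self hU hrange hclean,
    fun S hSl hSr ↦ ?_⟩
  have hkerR := ContinuousLinearMap.ker_one_add_symplecticReduction hSl hSr
  refine ⟨ContinuousLinearMap.symplecticReduction_mem_unitary hU hSl hSr, hkerR,
    (congrArg (fun K : Submodule ℂ Wᗮ ↦ Module.finrank ℂ K) hkerR).trans ?_⟩
  refine Submodule.finrank_map_of_disjoint_ker _ ?_
  rw [Submodule.ker_orthogonalProjectionOnto, W.orthogonal_orthogonal]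
  exact disjoint_iff.mpr hclean
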